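/- For a line of length n with description [l_1, ..., l_t], if S + t - 1 ≤ n and for some index j we have l_j > n - S - t + 1, then in every satisfying filling the cells at positions (p_j + n - S - t + 1) through (p_j + l_j - 1) are filled, where p_j = l_1 + ... + l_{j-1} + (j - 1) is the leftmost possible start of block j (positions 0-indexed). In particular at least one cell's value can be inferred. -/

import Mathlib

/-- Maximal run lengths of `true` (filled cells) in a list of booleans, left to right. -/
def runs : List Bool → List ℕ
  | [] => []
  | false :: xs => runs xs
  | true :: xs => ((xs.takeWhile id).length + 1) :: runs (xs.dropWhile id)
termination_by l => l.length
decreasing_by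
  all_goals simp_wf
  all_goals first
    | omega
    | (have := List.Sublist.length_le (List.dropWhile_sublist (l := xs) id); omega)

lemma runs_nil' : runs [] = [] := by simp [runs]
lemma runs_false (xs : List Bool) : runs (false :: xs) = runs xs := by simp [runs]
lemma runs_true (xs : List Bool) :
    runs (true :: xs) = ((xs.takeWhile id).length + 1) :: runs (xs.dropWhile id) := by
  simp [runs]

/-- Decomposition of a list by its first run. -/
lemma runs_decomp {w : List Bool} {l : ℕ} {rest : List ℕ} (h : runs w = l :: rest) :
    ∃ a w', w = List.replicate a false ++ List.replicate l true ++ w' ∧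
      runs w' = rest ∧ w'.head? ≠ some true := by
  induction w using runs.induct with
  | case1 => rw [runs_nil'] at h; exact absurd h (by simp)
  | case2 xs ih =>
      rw [runs_false] at h
      obtain ⟨a, w', h1, h2, h3⟩ := ih h
      exact ⟨a + 1, w', by simp [h1, List.replicate_succ], h2, h3⟩
  | case3 xs _ =>
      rw [runs_true] at h
      obtain ⟨hl, hrest⟩ := List.cons.injEq .. ▸ h
      refine ⟨0, xs.dropWhile id, ?_, hrest, ?_⟩
      · have htw : xs.takeWhile id = List.replicate (xs.takeWhile id).length true := by
          rw [List.eq_replicate_iff]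
          exact ⟨rfl, fun b hb => by simpa using List.mem_takeWhile_imp hb⟩
        rw [← hl]
        simp only [List.nil_append, List.replicate_succ, List.cons.injEq, true_and]
        conv_lhs => rw [← List.takeWhile_append_dropWhile (p := id) (l := xs), htw]
        simp
      · have := List.head?_dropWhile_not id xs
        cases hh : (xs.dropWhile id).head? with
        | none => simp
        | some b => rw [hh] at this; simp at this; simp [hh, this]

/-- Total space needed by a description. -/
lemma runs_space {d : List ℕ} : ∀ {w : List Bool}, runs w = d → d.sum + d.length ≤ w.length + 1 := by
  induction d with
  | nil => intro w _; simp
  | cons l rest ih =>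
      intro w h
      obtain ⟨a, w', h1, h2, _h3⟩ := runs_decomp h
      have hlen : w.length = a + l + w'.length := by simp [h1]; ring
      rcases rest with _ | ⟨r, rs⟩
      · simp at h2 ⊢; omega
      · have hw' : w' ≠ [] := by
          intro he; rw [he, runs_nil'] at h2; exact absurd h2 (by simp)
        rcases w' with _ | ⟨b, y⟩
        · exact absurd rfl hw'
        · cases b with
          | true => exact absurd rfl _h3
          | false =>
              rw [runs_false] at h2
              have := ih h2
              simp only [List.sum_cons, List.length_cons] at *
              omega

/-- Every block sits at some position `s ≥ pⱼ`, leaving room for the rest, and the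
cells it occupies are filled. -/
lemma runs_block : ∀ (d : List ℕ) (w : List Bool), runs w = d →
    ∀ (j : ℕ) (hj : j < d.length), ∃ s,
      (d.take j).sum + j ≤ s ∧
      s + (d.drop j).sum + (d.length - 1 - j) ≤ w.length ∧
      ∀ k, s ≤ k → k < s + d.get ⟨j, hj⟩ → w.getD k false = true := by
  intro d
  induction d with
  | nil => intro w _ j hj; exact absurd hj (by simp)
  | cons l rest ih =>
      intro w h j hj
      obtain ⟨a, w', h1, h2, h3⟩ := runs_decomp h
      have hlen : w.length = a + l + w'.length := by simp [h1]; ring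
      cases j with
      | zero =>
          refine ⟨a, by simp, ?_, ?_⟩
          · have hrw : rest.sum + rest.length ≤ w'.length := by
              rcases rest with _ | ⟨r, rs⟩
              · simp
              · rcases w' with _ | ⟨b, y⟩
                · rw [runs_nil'] at h2; exact absurd h2 (by simp)
                · cases b with
                  | true => exact absurd rfl h3
                  | false =>
                      rw [runs_false] at h2
                      have := runs_space h2
                      simp only [List.sum_cons, List.length_cons] at *
                      omega
            simp only [List.drop_zero, List.sum_cons, List.length_cons]
            omega
          · intro k hk1 hk2
            simp only [List.get] at hk2
            rw [h1, List.append_assoc,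
              List.getD_append_right _ _ _ _ (by simpa using hk1)]
            rw [List.getD_append _ _ _ _ (by simp; omega)]
            rw [List.getD_eq_getElem _ _ (by simp; omega)]
            simp
      | succ j' =>
          have hj' : j' < rest.length := by simpa using hj
          have hrne : rest ≠ [] := by intro he; rw [he] at hj'; simp at hj'
          rcases w' with _ | ⟨b, y⟩
          · rw [runs_nil'] at h2; exact absurd h2.symm hrne
          · cases b with
            | true => exact absurd rfl h3
            | false =>
                rw [runs_false] at h2
                obtain ⟨s', hs1, hs2, hs3⟩ := ih y h2 j' hj'
                refine ⟨a + l + 1 + s', ?_, ?_, ?_⟩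
                · simp only [List.take_succ_cons, List.sum_cons]
                  omega
                · simp only [List.drop_succ_cons, List.length_cons] at *
                  omega
                · intro k hk1 hk2
                  have hget : (l :: rest).get ⟨j' + 1, hj⟩ = rest.get ⟨j', hj'⟩ := rfl
                  rw [hget] at hk2
                  rw [h1, List.getD_append_right _ _ _ _ (by simp; omega)]
                  simp only [List.length_append, List.length_replicate]
                  have hc : (false :: y).getD (k - (a + l)) false
                      = y.getD (k - (a + l) - 1) false := by
                    rcases Nat.exists_eq_add_of_le (show 1 ≤ k - (a + l) by omega) with ⟨m, hm⟩
                    rw [hm]; simp [Nat.add_comm]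
                  rw [hc]
                  exact hs3 _ (by omega) (by omega)

/-- If block j is longer than the slack n - S - t + 1, the cells from
p_j + (n - S - t + 1) through p_j + l_j - 1 are filled in every satisfying filling;
in particular some cell's value can be inferred. -/
theorem stmt_3 (n : ℕ) (d : List ℕ) (hpos : ∀ l ∈ d, 1 ≤ l)
    (hfit : d.sum + d.length - 1 ≤ n) (j : ℕ) (hj : j < d.length)
    (hbig : d.get ⟨j, hj⟩ > n + 1 - d.sum - d.length) :
    (∀ w : List Bool, w.length = n → runs w = d →
      ∀ k, (d.take j).sum + j + (n + 1 - d.sum - d.length) ≤ k →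
        k < (d.take j).sum + j + d.get ⟨j, hj⟩ → w.getD k false = true) ∧
    (∃ k < n, ∀ w : List Bool, w.length = n → runs w = d → w.getD k false = true) := by
  have hsplit : (d.take j).sum + (d.drop j).sum = d.sum := List.sum_take_add_sum_drop d j
  have hdropc : d.drop j = d.get ⟨j, hj⟩ :: d.drop (j + 1) :=
    (List.getElem_cons_drop (as := d) hj).symm
  have hdsum : (d.drop j).sum = d.get ⟨j, hj⟩ + (d.drop (j + 1)).sum := by
    rw [hdropc, List.sum_cons]
  have hmain : ∀ w : List Bool, w.length = n → runs w = d →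
      ∀ k, (d.take j).sum + j + (n + 1 - d.sum - d.length) ≤ k →
        k < (d.take j).sum + j + d.get ⟨j, hj⟩ → w.getD k false = true := by
    intro w hwl hr k hk1 hk2
    obtain ⟨s, hs1, hs2, hs3⟩ := runs_block d w hr j hj
    rw [hwl] at hs2
    exact hs3 k (by omega) (by omega)
  refine ⟨hmain, ⟨(d.take j).sum + j + (n + 1 - d.sum - d.length), ?_, ?_⟩⟩
  · omega
  · intro w hwl hr
    exact hmain w hwl hr _ le_rfl (by omega)
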